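/- arXiv:2407.10576 — 8 statements merged into one kernel-verified Lean document; each statement's English description precedes it below -/
import Mathlib

section
/- Let R be a finite commutative local ring with maximal ideal M, let π: R → R/M be the quotient map, and let A be an m×n matrix over R. Then the McCoy rank of A equals the rank of π(A) over the field R/M. -/
/-! In an Artinian local ring the maximal ideal `M` is nilpotent, so every proper ideal has a
nonzero annihilator. Hence the annihilator of `I_k(A)` vanishes exactly when `I_k(A) = R`, i.e.
when `I_k(A) ⊄ M`, i.e. when some `k × k` minor of `π(A)` is nonzero. Over the field `R/M` the
largest such `k` is the rank, since a matrix of rank `r` has a nonsingular `r × r` submatrix. -/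

open Matrix

/-- The ideal generated by all `k × k` minors of a matrix. -/
def minorsIdeal {R : Type*} [CommRing R] {m n : ℕ}
    (A : Matrix (Fin m) (Fin n) R) (k : ℕ) : Ideal R :=
  Ideal.span {d | ∃ (r : Fin k → Fin m) (c : Fin k → Fin n), d = (A.submatrix r c).det}

/-- The McCoy rank of a matrix: the largest `k` such that the annihilator of the
ideal of `k × k` minors is zero. -/
noncomputable def mccoyRank {R : Type*} [CommRing R] {m n : ℕ}
    (A : Matrix (Fin m) (Fin n) R) : ℕ :=
  sSup {k | (minorsIdeal A k).annihilator = ⊥}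

namespace Matrix

variable {m n : Type*}

theorem le_rank_of_submatrix_det_ne_zero {R : Type*} [CommRing R] [IsDomain R] [Fintype n]
    {k : ℕ} (B : Matrix m n R) (r : Fin k → m) (c : Fin k → n)
    (h : (B.submatrix r c).det ≠ 0) : k ≤ B.rank := by
  simpa [rank_of_det_ne_zero h] using B.rank_submatrix_le r c

variable {K : Type*} [Field K]

theorem exists_linearIndependent_submatrix_cols [Fintype n] (B : Matrix m n K) {k : ℕ}
    (hk : B.rank = k) : ∃ c : Fin k → n, LinearIndependent K (B.submatrix id c).col := by
  obtain ⟨κ, a, ha, hspan, hli⟩ := exists_linearIndependent' K B.col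
  have : Finite κ := Finite.of_injective a ha
  have := Fintype.ofFinite κ
  have hcard : Fintype.card κ = k := by
    rw [← hk, rank_eq_finrank_span_cols, ← hspan, finrank_span_eq_card hli]
  let e := Fintype.equivFinOfCardEq hcard
  exact ⟨a ∘ e.symm, hli.comp e.symm e.symm.injective⟩

theorem exists_submatrix_det_ne_zero [Fintype m] [Fintype n] (B : Matrix m n K) :
    ∃ (r : Fin B.rank → m) (c : Fin B.rank → n), (B.submatrix r c).det ≠ 0 := by
  obtain ⟨c, hc⟩ := B.exists_linearIndependent_submatrix_cols rfl
  have hrank : (B.submatrix id c)ᵀ.rank = B.rank := by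
    rw [rank_transpose, rank_eq_finrank_span_cols, finrank_span_eq_card hc, Fintype.card_fin]
  obtain ⟨r, hr⟩ := (B.submatrix id c)ᵀ.exists_linearIndependent_submatrix_cols hrank
  have hunit : IsUnit (B.submatrix r c) := linearIndependent_rows_iff_isUnit.mp hr
  exact ⟨r, c, ((isUnit_iff_isUnit_det _).mp hunit).ne_zero⟩

end Matrix

theorem minorsIdeal_ne_bot_iff {R : Type*} [CommRing R] {m n : ℕ}
    (A : Matrix (Fin m) (Fin n) R) (k : ℕ) :
    minorsIdeal A k ≠ ⊥ ↔
      ∃ (r : Fin k → Fin m) (c : Fin k → Fin n), (A.submatrix r c).det ≠ 0 := by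
  simp [minorsIdeal]

theorem isGreatest_minorsIdeal_ne_bot_rank {K : Type*} [Field K] {m n : ℕ}
    (B : Matrix (Fin m) (Fin n) K) : IsGreatest {k | minorsIdeal B k ≠ ⊥} B.rank := by
  refine ⟨(minorsIdeal_ne_bot_iff B _).mpr B.exists_submatrix_det_ne_zero, fun k hk => ?_⟩
  obtain ⟨r, c, h⟩ := (minorsIdeal_ne_bot_iff B k).mp hk
  exact B.le_rank_of_submatrix_det_ne_zero r c h

theorem map_minorsIdeal {R S : Type*} [CommRing R] [CommRing S] (f : R →+* S) {m n : ℕ}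
    (A : Matrix (Fin m) (Fin n) R) (k : ℕ) :
    (minorsIdeal A k).map f = minorsIdeal (A.map f) k := by
  simp only [minorsIdeal, Ideal.map_span]
  congr 1
  ext d
  simp [f.map_det, submatrix_map, eq_comm]

theorem Ideal.annihilator_ne_bot_of_isNilpotent {R : Type*} [CommRing R] [Nontrivial R]
    {I : Ideal R} (hI : IsNilpotent I) : I.annihilator ≠ ⊥ := by
  intro hann
  have hdrop : ∀ k, I ^ (k + 1) = ⊥ → I ^ k = ⊥ := fun k hk => by
    rw [eq_bot_iff, ← hann, Submodule.le_annihilator_iff, smul_eq_mul, ← pow_succ, hk]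
  have htop : ∀ k, I ^ k = ⊥ → (⊤ : Ideal R) = ⊥ := fun k => by
    induction k with
    | zero => simp
    | succ k ih => exact fun hk => ih (hdrop k hk)
  obtain ⟨k, hk⟩ := hI
  exact top_ne_bot (htop k hk)

theorem IsLocalRing.annihilator_eq_bot_iff_eq_top {R : Type*} [CommRing R] [IsLocalRing R]
    [IsArtinianRing R] (I : Ideal R) : I.annihilator = ⊥ ↔ I = ⊤ := by
  constructor
  · intro h
    by_contra hI
    have hM : IsNilpotent (maximalIdeal R) :=
      jacobson_eq_maximalIdeal (⊥ : Ideal R) bot_ne_top ▸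
        IsArtinianRing.isNilpotent_jacobson_bot
    exact Ideal.annihilator_ne_bot_of_isNilpotent hM
      (eq_bot_iff.mpr (h ▸ Submodule.annihilator_mono (le_maximalIdeal hI)))
  · rintro rfl
    rw [Submodule.annihilator_top, Module.annihilator_eq_bot]
    infer_instance

theorem IsLocalRing.eq_top_iff_map_residue_ne_bot {R : Type*} [CommRing R] [IsLocalRing R]
    (I : Ideal R) : I = ⊤ ↔ I.map (residue R) ≠ ⊥ := by
  rw [ne_eq, Ideal.map_eq_bot_iff_le_ker, ker_residue]
  exact ⟨fun h hle => (maximalIdeal.isMaximal R).ne_top (top_le_iff.mp (h ▸ hle)),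
    not_imp_comm.mp le_maximalIdeal⟩

theorem mccoyRank_eq_rank_residue {R : Type*} [CommRing R] [IsLocalRing R] [Fintype R]
    {m n : ℕ} (A : Matrix (Fin m) (Fin n) R) :
    mccoyRank A = (A.map (IsLocalRing.residue R)).rank := by
  have hsets : {k | (minorsIdeal A k).annihilator = ⊥}
      = {k | minorsIdeal (A.map (IsLocalRing.residue R)) k ≠ ⊥} := by
    ext k
    rw [Set.mem_ofPred_eq, IsLocalRing.annihilator_eq_bot_iff_eq_top,
      IsLocalRing.eq_top_iff_map_residue_ne_bot, map_minorsIdeal]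
    rfl
  rw [mccoyRank, hsets]
  exact (isGreatest_minorsIdeal_ne_bot_rank _).csSup_eq
end

section
/- Let R be a finite commutative ring and x = (r_1,…,r_n) ∈ R^n. If R is local, then the following are equivalent: (i) the matrix (r_1,…,r_n) has a right inverse (x is unimodular); (ii) some r_i is a unit; (iii) {x} is linearly independent. -/
open Matrix

theorem unimodular_iff_exists_isUnit_iff_linearIndependent
    {R : Type*} [CommRing R] [IsLocalRing R] [Fintype R] {n : ℕ} (x : Fin n → R) :
    ((∃ y : Fin n → R, x ⬝ᵥ y = 1) ↔ ∃ i, IsUnit (x i)) ∧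
      ((∃ i, IsUnit (x i)) ↔ ∀ r : R, r • x = 0 → r = 0) := by
  have hmem : ∀ i, ¬ IsUnit (x i) → x i ∈ IsLocalRing.maximalIdeal R := fun i h =>
    (IsLocalRing.mem_maximalIdeal _).mpr h
  constructor
  · constructor
    · rintro ⟨y, hy⟩
      by_contra h
      push_neg at h
      have h1 : (1 : R) ∈ IsLocalRing.maximalIdeal R := by
        rw [← hy]
        exact Ideal.sum_mem _ fun i _ => Ideal.mul_mem_right _ _ (hmem i (h i))
      exact (IsLocalRing.maximalIdeal.isMaximal R).ne_top
        ((Ideal.eq_top_iff_one _).mpr h1)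
    · rintro ⟨i, hi⟩
      obtain ⟨u, hu⟩ := hi
      exact ⟨Pi.single i (↑u⁻¹ : R), by
        rw [dotProduct_single, ← hu, Units.mul_inv]⟩
  · constructor
    · rintro ⟨i, hi⟩ r hr
      have h0 : r * x i = 0 := by simpa [mul_comm] using congrFun hr i
      exact (hi.mul_left_eq_zero).mp h0
    · intro h
      by_contra hnu
      push_neg at hnu
      have hart : IsArtinianRing R := isArtinian_of_finite
      obtain ⟨k, hk⟩ := IsArtinianRing.isNilpotent_jacobson_bot (R := R)
      rw [IsLocalRing.jacobson_eq_maximalIdeal ⊥ bot_ne_top] at hk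
      -- least k with m^k = 0
      have hex : ∃ k, (IsLocalRing.maximalIdeal R) ^ k = ⊥ := ⟨k, hk⟩
      classical
      let k0 := Nat.find hex
      have hk0 : (IsLocalRing.maximalIdeal R) ^ k0 = ⊥ := Nat.find_spec hex
      have hk0pos : 0 < k0 := by
        rcases Nat.eq_zero_or_pos k0 with h0 | h0
        · exfalso
          have := hk0
          rw [h0, pow_zero, Ideal.one_eq_top] at this
          have h1 : (1 : R) ∈ (⊥ : Ideal R) := this ▸ Submodule.mem_top
          exact one_ne_zero (Ideal.mem_bot.mp h1)
        · exact h0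
      have hne : (IsLocalRing.maximalIdeal R) ^ (k0 - 1) ≠ ⊥ :=
        Nat.find_min hex (by omega)
      obtain ⟨r, hr, hrne⟩ := Submodule.exists_mem_ne_zero_of_ne_bot hne
      refine hrne (h r ?_)
      funext i
      have hxi : x i ∈ IsLocalRing.maximalIdeal R := hmem i (hnu i)
      have : r * x i ∈ (IsLocalRing.maximalIdeal R) ^ k0 := by
        have : r * x i ∈ (IsLocalRing.maximalIdeal R) ^ (k0 - 1) * IsLocalRing.maximalIdeal R :=
          Ideal.mul_mem_mul hr hxi
        rwa [← pow_succ, Nat.sub_add_cancel hk0pos] at this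
      rw [hk0] at this
      simpa using this
end

section
/- Let R be a finite commutative local ring, m ≤ n, and A an m×n matrix over R. Then the McCoy rank of A equals m if and only if there exists an invertible n×n matrix S over R such that AS = (I_m, 0). -/
open Matrix

/-- The `m × n` block matrix `(I_m, 0)`. -/
def idZero (R : Type*) [CommRing R] (m n : ℕ) : Matrix (Fin m) (Fin n) R :=
  Matrix.of fun i j => if (i : ℕ) = (j : ℕ) then 1 else 0

/-!
A finite local ring is Artinian, so its maximal ideal is nilpotent and every proper ideal has a
nonzero annihilator. Hence `mccoyRank A = m` says that the `m × m` minors of `A` generate the unit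
ideal, i.e. (`R` being local) that some `m × m` minor is a unit. Adding to `A` the unit rows
`e_j` for the columns `j` outside that minor gives an invertible `n × n` matrix `B`, and
`S = B⁻¹` works.
Conversely, if `A * S = (I_m, 0)` then the first `m` columns `M` of `S` satisfy `A * M = 1`, and by
Cauchy–Binet `det (A * M)` lies in the ideal of `m × m` minors of `A`.
-/

namespace Ideal

theorem annihilator_ne_bot_of_isNilpotent_s3 {R : Type*} [CommRing R] [Nontrivial R] {I : Ideal R}
    (hI : IsNilpotent I) : I.annihilator ≠ ⊥ := by
  intro hann
  obtain ⟨N, hN⟩ := hI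
  induction N with
  | zero => exact one_ne_zero (pow_zero I ▸ hN)
  | succ k ih =>
    refine ih (le_bot_iff.mp ?_)
    calc I ^ k ≤ I.annihilator := by
          rw [Submodule.le_annihilator_iff, smul_eq_mul, ← pow_succ, hN, zero_eq_bot]
      _ = ⊥ := hann

theorem annihilator_top_eq_bot {R : Type*} [CommRing R] : (⊤ : Ideal R).annihilator = ⊥ := by
  rw [Submodule.annihilator_top, Module.annihilator_eq_bot]
  infer_instance

theorem annihilator_eq_bot_iff_eq_top {R : Type*} [CommRing R] [IsLocalRing R]
    [IsArtinianRing R] {I : Ideal R} : I.annihilator = ⊥ ↔ I = ⊤ := by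
  refine ⟨fun h => by_contra fun hI => annihilator_ne_bot_of_isNilpotent_s3 ?_ h, ?_⟩
  · obtain ⟨N, hN⟩ := IsArtinianRing.isNilpotent_jacobson_bot (R := R)
    rw [IsLocalRing.jacobson_eq_maximalIdeal ⊥ bot_ne_top] at hN
    exact ⟨N, le_bot_iff.mp ((pow_right_mono (IsLocalRing.le_maximalIdeal hI) N).trans hN.le)⟩
  · rintro rfl
    exact annihilator_top_eq_bot

end Ideal

theorem Function.Injective.exists_equiv_sum_fin {α β : Type*} [Fintype α] [Fintype β]
    {c : α → β} (hc : Function.Injective c) {k : ℕ}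
    (hk : Fintype.card α + k = Fintype.card β) :
    ∃ f : α ⊕ Fin k ≃ β, f ∘ Sum.inl = c := by
  classical
  have hcard : Fintype.card ↥(Set.range c)ᶜ = k := by
    rw [Fintype.card_compl_set, Set.card_range_of_injective hc]
    omega
  exact ⟨(Equiv.sumCongr (Equiv.ofInjective c hc) (Fintype.equivFinOfCardEq hcard).symm).trans
    (Equiv.Set.sumCompl _), by ext; simp⟩

section minors

variable {R : Type*} [CommRing R] {m n : ℕ}

theorem minorsIdeal_zero (A : Matrix (Fin m) (Fin n) R) : minorsIdeal A 0 = ⊤ :=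
  (Ideal.eq_top_iff_one _).mpr (Ideal.subset_span ⟨Fin.elim0, Fin.elim0, det_isEmpty.symm⟩)

theorem minorsIdeal_eq_bot_of_lt (A : Matrix (Fin m) (Fin n) R) {k : ℕ} (hk : m < k) :
    minorsIdeal A k = ⊥ := by
  rw [eq_bot_iff, minorsIdeal, Ideal.span_le]
  rintro _ ⟨r, c, rfl⟩
  obtain ⟨i, j, hne, hij⟩ := Fintype.exists_ne_map_eq_of_card_lt r (by simpa using hk)
  exact det_zero_of_row_eq hne (by ext; simp [hij])

theorem mccoyRank_eq_iff_annihilator_eq_bot [Nontrivial R] (A : Matrix (Fin m) (Fin n) R) :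
    mccoyRank A = m ↔ (minorsIdeal A m).annihilator = ⊥ := by
  have h0 : (minorsIdeal A 0).annihilator = ⊥ := by
    rw [minorsIdeal_zero]
    exact Ideal.annihilator_top_eq_bot
  have hbdd : ∀ k ∈ {k | (minorsIdeal A k).annihilator = ⊥}, k ≤ m := by
    intro k (hk : (minorsIdeal A k).annihilator = ⊥)
    by_contra! hlt
    rw [minorsIdeal_eq_bot_of_lt A hlt, Submodule.annihilator_bot] at hk
    exact top_ne_bot hk
  refine ⟨fun h => ?_, fun hm => IsGreatest.csSup_eq ⟨hm, hbdd⟩⟩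
  have hmem := Nat.sSup_mem ⟨0, h0⟩ ⟨m, hbdd⟩
  rwa [← mccoyRank, h] at hmem

theorem det_mul_mem_minorsIdeal {k : ℕ} (A : Matrix (Fin k) (Fin n) R)
    (M : Matrix (Fin n) (Fin k) R) : (A * M).det ∈ minorsIdeal A k := by
  classical
  -- expand `det` multilinearly in the rows of `(A * M)ᵀ`, combinations of the rows of `Aᵀ`
  have hrows : Mᵀ * Aᵀ = of fun i => ∑ j, M j i • Aᵀ j := by
    ext; simp [mul_apply, mul_comm]
  rw [← det_transpose, transpose_mul, hrows]
  change detRowAlternating.toMultilinearMap (fun i => ∑ j, M j i • Aᵀ j) ∈ _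
  rw [MultilinearMap.map_sum]
  refine Ideal.sum_mem _ fun g _ => ?_
  rw [MultilinearMap.map_smul_univ, smul_eq_mul]
  refine Ideal.mul_mem_left _ _ (Ideal.subset_span ⟨id, g, ?_⟩)
  rw [← det_transpose (A.submatrix id g), transpose_submatrix]
  rfl

theorem minorsIdeal_eq_top_of_mul_eq_one {k : ℕ} (A : Matrix (Fin k) (Fin n) R)
    (M : Matrix (Fin n) (Fin k) R) (h : A * M = 1) : minorsIdeal A k = ⊤ :=
  (Ideal.eq_top_iff_one _).mpr (by simpa [h] using det_mul_mem_minorsIdeal A M)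

theorem exists_isUnit_det_submatrix_of_minorsIdeal_eq_top [IsLocalRing R]
    (A : Matrix (Fin m) (Fin n) R) (h : minorsIdeal A m = ⊤) :
    ∃ c : Fin m → Fin n, Function.Injective c ∧ IsUnit (A.submatrix id c).det := by
  obtain ⟨r, c, hu⟩ : ∃ r c, IsUnit (A.submatrix r c).det := by
    by_contra! hno
    refine (IsLocalRing.maximalIdeal.isMaximal R).ne_top
      (top_le_iff.mp (h ▸ Ideal.span_le.mpr ?_))
    rintro _ ⟨r, c, rfl⟩
    exact hno r c
  have hfactor : A.submatrix r c =
      (1 : Matrix (Fin m) (Fin m) R).submatrix r id * A.submatrix id c := by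
    rw [← submatrix_mul _ _ _ _ _ Function.bijective_id, Matrix.one_mul]
  rw [hfactor, det_mul] at hu
  have hc := isUnit_of_mul_isUnit_right hu
  refine ⟨c, fun i j hij => by_contra fun hne => ?_, hc⟩
  exact not_isUnit_zero
    (det_zero_of_column_eq (M := A.submatrix id c) hne (fun k => congrArg (A k) hij) ▸ hc)

end minors

section completion

variable {R : Type*} [CommRing R] {m n : ℕ}

theorem idZero_eq_submatrix_one (hmn : m ≤ n) :
    idZero R m n = (1 : Matrix (Fin n) (Fin n) R).submatrix (Fin.castLE hmn) id := by
  ext i j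
  simp [idZero, one_apply, Fin.ext_iff]

theorem idZero_submatrix_castLE (hmn : m ≤ n) :
    (idZero R m n).submatrix id (Fin.castLE hmn) = 1 := by
  rw [idZero_eq_submatrix_one hmn, submatrix_submatrix]
  exact submatrix_one _ (Fin.castLE_injective hmn)

theorem exists_isUnit_submatrix_castLE_eq (hmn : m ≤ n) (A : Matrix (Fin m) (Fin n) R)
    {c : Fin m → Fin n} (hc : Function.Injective c) (hu : IsUnit (A.submatrix id c).det) :
    ∃ B : Matrix (Fin n) (Fin n) R, IsUnit B ∧ B.submatrix (Fin.castLE hmn) id = A := by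
  classical
  obtain ⟨f, hf⟩ := hc.exists_equiv_sum_fin (k := n - m) (by simp; omega)
  let g : Fin m ⊕ Fin (n - m) ≃ Fin n :=
    finSumFinEquiv.trans (finCongr (Nat.add_sub_cancel' hmn))
  let B : Matrix (Fin n) (Fin n) R :=
    (fromRows A ((1 : Matrix (Fin n) (Fin n) R).submatrix (f ∘ Sum.inr) id)).submatrix g.symm id
  have hblocks : B.submatrix g f =
      fromBlocks (A.submatrix id c) (A.submatrix id (f ∘ Sum.inr)) 0 1 := by
    ext (i | i) (j | j) <;> simp [B, ← hf, one_apply]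
  refine ⟨B, ?_, ?_⟩
  · rw [← isUnit_submatrix_equiv g f, hblocks, isUnit_iff_isUnit_det, det_fromBlocks_zero₂₁,
      det_one, mul_one]
    exact hu
  · have hg : ∀ i, g.symm (Fin.castLE hmn i) = Sum.inl i := fun i =>
      g.symm_apply_eq.mpr (by ext; simp [g])
    ext i j
    simp [B, hg]

end completion

theorem mccoyRank_eq_iff_exists_GL {R : Type*} [CommRing R] [IsLocalRing R] [Fintype R]
    {m n : ℕ} (hmn : m ≤ n) (A : Matrix (Fin m) (Fin n) R) :
    mccoyRank A = m ↔
      ∃ S : GL (Fin n) R, A * (S : Matrix (Fin n) (Fin n) R) = idZero R m n := by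
  rw [mccoyRank_eq_iff_annihilator_eq_bot, Ideal.annihilator_eq_bot_iff_eq_top]
  constructor
  · intro h
    obtain ⟨c, hc, hu⟩ := exists_isUnit_det_submatrix_of_minorsIdeal_eq_top A h
    obtain ⟨B, hB, rfl⟩ := exists_isUnit_submatrix_castLE_eq hmn A hc hu
    refine ⟨hB.unit⁻¹, ?_⟩
    rw [idZero_eq_submatrix_one hmn, ← hB.mul_val_inv,
      submatrix_mul _ _ _ _ _ Function.bijective_id, submatrix_id_id]
  · rintro ⟨S, hS⟩
    refine minorsIdeal_eq_top_of_mul_eq_one A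
      ((S : Matrix (Fin n) (Fin n) R).submatrix id (Fin.castLE hmn)) ?_
    rw [← submatrix_id_id A, ← submatrix_mul _ _ _ _ _ Function.bijective_id, hS,
      idZero_submatrix_castLE]
end

section
/- Let R be a finite commutative local ring with maximal ideal M. Then |GL_n(R)| = |R|^{n(n-1)/2} · ∏_{i=0}^{n-1} (|R|^{n-i} − |M|^{n-i}). -/
/-!
Reduction modulo the maximal ideal `M` is a surjective homomorphism `GL_n(R) → GL_n(R/M)`:
a matrix is invertible iff its determinant is a unit, and units of a local ring are detected
modulo `M`. Its kernel is `1 + M_n(M)`, of size `|M|^(n²)`. Multiplying by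
`|GL_n(R/M)| = ∏ (qⁿ - qⁱ)` with `q = |R| / |M|` and distributing the powers of `|M|` over
the factors gives the formula.
-/

open Matrix Finset

theorem Nat.prod_range_pow_sub_pow_mul_pow_sq (q m n : ℕ) :
    (∏ i ∈ range n, (q ^ n - q ^ i)) * m ^ n ^ 2 =
      (q * m) ^ (n * (n - 1) / 2) * ∏ i ∈ range n, ((q * m) ^ (n - i) - m ^ (n - i)) := by
  have hq : ∀ i ∈ range n, q ^ n - q ^ i = q ^ i * (q ^ (n - i) - 1) := fun i hi => by
    rw [Nat.mul_sub, mul_one, ← pow_add, Nat.add_sub_cancel' (mem_range.1 hi).le]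
  have hqm : ∀ i ∈ range n, (q * m) ^ (n - i) - m ^ (n - i) = m ^ (n - i) * (q ^ (n - i) - 1) :=
    fun i _ => by rw [Nat.mul_sub, mul_one, mul_pow, mul_comm]
  have hsum : ∑ i ∈ range n, i + ∑ i ∈ range n, (n - i) = n ^ 2 := by
    rw [← sum_add_distrib, sum_congr rfl fun i hi => Nat.add_sub_cancel' (mem_range.1 hi).le,
      sum_const, card_range, smul_eq_mul, sq]
  rw [prod_congr rfl hq, prod_congr rfl hqm, prod_mul_distrib, prod_mul_distrib,
    prod_pow_eq_pow_sum, prod_pow_eq_pow_sum, ← sum_range_id, ← hsum]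
  ring

namespace Matrix.GeneralLinearGroup

variable {n R S : Type*} [Fintype n] [DecidableEq n] [CommRing R] [CommRing S] (f : R →+* S)

theorem map_surjective [IsLocalHom f] (hf : Function.Surjective f) :
    Function.Surjective (map (n := n) f) := by
  intro g
  obtain ⟨A, hA⟩ : ∃ A : Matrix n n R, A.map f = g :=
    hf.comp_left.comp_left (g : Matrix n n S)
  have hdet : IsUnit A.det := by
    refine isUnit_of_map_unit f _ ?_
    rw [RingHom.map_det, RingHom.mapMatrix_apply, hA]
    exact g.isUnit.map detMonoidHom
  exact ⟨mk'' A hdet, Units.ext hA⟩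

theorem mem_ker_map_iff {g : GL n R} :
    g ∈ (map (n := n) f).ker ↔
      ∀ i j, (g : Matrix n n R) i j - (1 : Matrix n n R) i j ∈ RingHom.ker f := by
  rw [MonoidHom.mem_ker, ← map_one (map (n := n) f), Units.ext_iff, ← Matrix.ext_iff]
  exact forall₂_congr fun i j => (RingHom.sub_mem_ker_iff f).symm

theorem isUnit_det_one_add_of_mem_ker [IsLocalHom f] {A : Matrix n n R}
    (hA : ∀ i j, A i j ∈ RingHom.ker f) : IsUnit (1 + A).det := by
  refine isUnit_of_map_unit f _ ?_
  have hmap : f.mapMatrix (1 + A) = 1 := by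
    ext i j
    simp [RingHom.mem_ker.1 (hA i j), Matrix.one_apply]
  rw [RingHom.map_det, hmap, det_one]
  exact isUnit_one

noncomputable def kerMapEquiv [IsLocalHom f] :
    (map (n := n) f).ker ≃ Matrix n n (RingHom.ker f) where
  toFun g := of fun i j => ⟨_, (mem_ker_map_iff f).1 g.2 i j⟩
  invFun B := ⟨mk'' _ (isUnit_det_one_add_of_mem_ker f (A := B.map (↑)) fun i j => (B i j).2),
    (mem_ker_map_iff f).2 fun i j => by simp⟩
  left_inv g := by ext i j; simp
  right_inv B := by ext i j; simp

theorem card_eq_card_mul_card_ker_pow [IsLocalHom f] (hf : Function.Surjective f) :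
    Nat.card (GL n R) = Nat.card (GL n S) * Nat.card (RingHom.ker f) ^ Fintype.card n ^ 2 := by
  rw [← (map (n := n) f).ker.card_mul_index, Subgroup.index_ker,
    MonoidHom.range_eq_top.2 (map_surjective f hf), Subgroup.card_top,
    Nat.card_congr (kerMapEquiv f), mul_comm]
  simp [Matrix, Nat.card_fun, ← pow_mul, sq]

end Matrix.GeneralLinearGroup

theorem Matrix.card_GL_field_eq_prod_range {K : Type*} [Field K] [Finite K] (n : ℕ) :
    Nat.card (GL (Fin n) K) = ∏ i ∈ range n, (Nat.card K ^ n - Nat.card K ^ i) := by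
  have := Fintype.ofFinite K
  rw [card_GL_field, Nat.card_eq_fintype_card, Fin.prod_univ_eq_prod_range (fun i => _ ^ n - _ ^ i)]

open IsLocalRing in
theorem card_GL_local_ring {R : Type*} [CommRing R] [IsLocalRing R] [Fintype R] (n : ℕ) :
    Nat.card (GL (Fin n) R) =
      Nat.card R ^ (n * (n - 1) / 2) *
        ∏ i ∈ Finset.range n,
          (Nat.card R ^ (n - i) - Nat.card (IsLocalRing.maximalIdeal R) ^ (n - i)) := by
  have : Finite (ResidueField R) := .of_surjective _ residue_surjective
  have hR : Nat.card R = Nat.card (ResidueField R) * Nat.card (maximalIdeal R) :=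
    (Submodule.card_eq_card_quotient_mul_card _).trans (mul_comm _ _)
  rw [GeneralLinearGroup.card_eq_card_mul_card_ker_pow (residue R) residue_surjective, ker_residue,
    card_GL_field_eq_prod_range, Fintype.card_fin, hR]
  exact Nat.prod_range_pow_sub_pow_mul_pow_sq _ _ n
end

section
/- Let R = R_1 × ⋯ × R_ℓ be a product of finite commutative local rings, and let A be an m×n matrix over R. Then the McCoy rank of A equals the minimum over i ∈ {1,…,ℓ} of the McCoy rank of ρ_i(A), where ρ_i is the i-th projection applied entrywise. -/
open Matrix

namespace MccoyAux

variable {R : Type*} [CommRing R] {m n : ℕ} (A : Matrix (Fin m) (Fin n) R)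

lemma minorsIdeal_succ_le (k : ℕ) : minorsIdeal A (k + 1) ≤ minorsIdeal A k := by
  rw [minorsIdeal, Ideal.span_le]
  rintro d ⟨r, c, rfl⟩
  rw [Matrix.det_succ_row_zero]
  refine Ideal.sum_mem _ fun j _ => Ideal.mul_mem_left _ _ ?_
  refine Ideal.subset_span ⟨r ∘ Fin.succ, c ∘ j.succAbove, ?_⟩
  rw [Matrix.submatrix_submatrix]

lemma minorsIdeal_antitone : Antitone (minorsIdeal A) :=
  antitone_nat_of_succ_le (minorsIdeal_succ_le A)

lemma minorsIdeal_zero : minorsIdeal A 0 = ⊤ := by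
  rw [eq_top_iff, ← Ideal.span_singleton_one, Ideal.span_le, Set.singleton_subset_iff]
  exact Ideal.subset_span ⟨Fin.elim0, Fin.elim0, (Matrix.det_fin_zero).symm⟩

lemma ann_zero : (minorsIdeal A 0).annihilator = ⊥ := by
  rw [minorsIdeal_zero, eq_bot_iff]
  intro a ha
  have := Submodule.mem_annihilator.mp ha 1 trivial
  simpa using this

lemma minorsIdeal_eq_bot_of_lt (k : ℕ) (hk : m < k) : minorsIdeal A k = ⊥ := by
  rw [eq_bot_iff, minorsIdeal, Ideal.span_le]
  rintro d ⟨r, c, rfl⟩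
  have : Fintype.card (Fin m) < Fintype.card (Fin k) := by simpa
  obtain ⟨a, b, hab, hr⟩ := Fintype.exists_ne_map_eq_of_card_lt r this
  have hz : (A.submatrix r c).det = 0 :=
    Matrix.det_zero_of_row_eq hab (by ext j; simp [Matrix.submatrix_apply, hr])
  simp [hz]

lemma mccoyS_bdd [Nontrivial R] : {k | (minorsIdeal A k).annihilator = ⊥} ⊆ Set.Iic m := by
  intro k hk
  by_contra h
  rw [Set.mem_Iic, not_le] at h
  rw [Set.mem_setOf_eq, minorsIdeal_eq_bot_of_lt A k h, Submodule.annihilator_bot] at hk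
  have h1 : (1 : R) ∈ (⊥ : Ideal R) := hk ▸ trivial
  exact one_ne_zero ((Ideal.mem_bot).mp h1)

lemma mem_iff_le [Nontrivial R] (k : ℕ) :
    (minorsIdeal A k).annihilator = ⊥ ↔ k ≤ mccoyRank A := by
  have hbdd : BddAbove {k | (minorsIdeal A k).annihilator = ⊥} := ⟨m, mccoyS_bdd A⟩
  constructor
  · intro h
    exact le_csSup hbdd h
  · intro h
    have hmem : mccoyRank A ∈ {k | (minorsIdeal A k).annihilator = ⊥} :=
      Nat.sSup_mem ⟨0, ann_zero A⟩ hbdd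
    rw [eq_bot_iff]
    exact le_trans (Submodule.annihilator_mono (minorsIdeal_antitone A h)) (le_of_eq hmem)

lemma minorsIdeal_map {S : Type*} [CommRing S] (f : R →+* S) (k : ℕ) :
    minorsIdeal (A.map f) k = Ideal.map f (minorsIdeal A k) := by
  rw [minorsIdeal, minorsIdeal, Ideal.map_span]
  congr 1
  ext d
  constructor
  · rintro ⟨r, c, rfl⟩
    exact ⟨(A.submatrix r c).det, ⟨r, c, rfl⟩,
      by rw [RingHom.map_det, Matrix.submatrix_map]; rfl⟩
  · rintro ⟨e, ⟨r, c, rfl⟩, rfl⟩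
    exact ⟨r, c, by rw [RingHom.map_det, Matrix.submatrix_map]; rfl⟩

end MccoyAux

open MccoyAux

theorem mccoyRank_pi_eq_min {ι : Type*} [Fintype ι] [Nonempty ι]
    (R : ι → Type*) [∀ i, CommRing (R i)] [∀ i, IsLocalRing (R i)] [∀ i, Fintype (R i)]
    {m n : ℕ} (A : Matrix (Fin m) (Fin n) (∀ i, R i)) :
    mccoyRank A =
      Finset.univ.inf' Finset.univ_nonempty
        (fun i : ι => mccoyRank (A.map (fun x => x i))) := by
  classical
  haveI : Nontrivial (∀ i, R i) := by
    obtain ⟨i⟩ := ‹Nonempty ι›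
    exact ⟨0, 1, fun h => zero_ne_one (congrFun h i)⟩
  set f : ι → ℕ := fun i => mccoyRank (A.map (fun x => x i)) with hf
  -- key: annihilator of minors ideal in product vanishes iff it does componentwise
  have key : ∀ k : ℕ, (minorsIdeal A k).annihilator = ⊥ ↔
      ∀ i, (minorsIdeal (A.map (fun x => x i)) k).annihilator = ⊥ := by
    intro k
    constructor
    · intro h i
      rw [eq_bot_iff]
      intro y hy
      set x : ∀ j, R j := Pi.single i y with hx
      have hxmem : x ∈ (minorsIdeal A k).annihilator := by
        rw [Submodule.mem_annihilator]
        intro d hd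
        have hdi : d i ∈ minorsIdeal (A.map (fun x => x i)) k := by
          have heq : minorsIdeal (A.map (fun x => x i)) k
              = Ideal.map (Pi.evalRingHom R i) (minorsIdeal A k) :=
            minorsIdeal_map A (Pi.evalRingHom R i) k
          rw [heq]
          exact Ideal.mem_map_of_mem _ hd
        have : y * d i = 0 := Submodule.mem_annihilator.mp hy _ hdi
        funext j
        by_cases hj : j = i
        · subst hj
          simpa [hx, smul_eq_mul] using this
        · simp [hx, Pi.single_eq_of_ne hj, smul_eq_mul]
      have := h ▸ hxmem
      have hx0 : x = 0 := this
      have := congrFun hx0 i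
      simpa [hx] using this
    · intro h
      rw [eq_bot_iff]
      intro x hx
      funext i
      have hxi : x i ∈ (minorsIdeal (A.map (fun y => y i)) k).annihilator := by
        rw [minorsIdeal]
        refine (Submodule.mem_annihilator_span _ _).mpr ?_
        rintro ⟨e, r, c, rfl⟩
        have hd : (A.submatrix r c).det ∈ minorsIdeal A k :=
          Ideal.subset_span ⟨r, c, rfl⟩
        have hxd : x * (A.submatrix r c).det = 0 :=
          Submodule.mem_annihilator.mp hx _ hd
        have := congrFun hxd i
        have hmap : ((A.map (fun y => y i)).submatrix r c).det
            = (A.submatrix r c).det i := by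
          rw [Matrix.submatrix_map]
          exact (RingHom.map_det (Pi.evalRingHom R i) (A.submatrix r c)).symm
        simp only [smul_eq_mul, hmap]
        simpa using this
      rw [h i] at hxi
      simpa using hxi
  have hset : {k | (minorsIdeal A k).annihilator = ⊥} =
      Set.Iic (Finset.univ.inf' Finset.univ_nonempty f) := by
    ext k
    rw [Set.mem_setOf_eq, key k, Set.mem_Iic, Finset.le_inf'_iff]
    constructor
    · intro h i _
      exact (mem_iff_le _ k).mp (h i)
    · intro h i
      exact (mem_iff_le _ k).mpr (h i (Finset.mem_univ i))
  rw [mccoyRank, hset, csSup_Iic]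
end

section
/- Let R be a finite commutative ring and m ≤ n. Any linearly independent family α_1,…,α_m of vectors in R^n can be extended to a basis α_1,…,α_n of R^n whose matrix of rows is invertible. -/
/-!
A commutative Artinian ring is the product of its localizations at its finitely many maximal
ideals, and extending families to invertible matrices can be done factor by factor. Over an
Artinian local ring `R` with residue field `k`, the maximal ideal is an associated prime, i.e. the
annihilator of some `r ≠ 0`; multiplying a relation that holds modulo the maximal ideal by `r`
turns it into a relation over `R`, so a linearly independent family stays linearly independent
over `k`. Extend it to a basis of `kⁿ` and lift the new rows arbitrarily: a square matrix whose
determinant is a unit modulo the maximal ideal is invertible.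
-/

open Matrix IsLocalRing

def HasUnimodularExtensions (R : Type*) [CommRing R] : Prop :=
  ∀ ⦃m n : ℕ⦄ (hmn : m ≤ n) (v : Fin m → Fin n → R), LinearIndependent R v →
    ∃ w : Fin n → Fin n → R, (∀ i, w (Fin.castLE hmn i) = v i) ∧ IsUnit (Matrix.of w)

theorem Module.Basis.sumExtend_inl {K V ι : Type*} [DivisionRing K] [AddCommGroup V]
    [Module K V] {v : ι → V} (hv : LinearIndependent K v) (i : ι) :
    Module.Basis.sumExtend hv (Sum.inl i) = v i := by
  simp only [Module.Basis.sumExtend, Module.Basis.coe_reindex, Function.comp_apply,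
    Module.Basis.coe_extend]
  rfl

theorem LinearIndependent.map_ringEquiv {R S ι κ : Type*} [CommRing R] [CommRing S]
    (e : R ≃+* S) {v : ι → κ → R} (hv : LinearIndependent R v) :
    LinearIndependent S (fun i j ↦ e (v i j)) :=
  hv.map_of_injective_injective e.symm ((e : R →+ S).compLeft κ) (by simp)
    (fun x hx ↦ funext fun j ↦ by simpa using congrFun hx j)
    (fun r x ↦ funext fun j ↦ by simp)

theorem LinearIndependent.pi_eval {ι κ α : Type*} {S : α → Type*} [∀ a, CommRing (S a)]
    [Fintype ι] {v : ι → κ → ∀ a, S a} (hv : LinearIndependent (∀ a, S a) v) (a : α) :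
    LinearIndependent (S a) (fun i j ↦ v i j a) := by
  classical
  rw [Fintype.linearIndependent_iff] at hv ⊢
  intro g hg i
  have hsingle : ∑ i, Pi.single a (g i) • v i = 0 := by
    funext j b
    by_cases hb : b = a
    · subst hb
      simpa [Finset.sum_apply] using congrFun hg j
    · simp [Finset.sum_apply, hb]
  simpa using congrFun (hv _ hsingle i) a

theorem IsLocalRing.exists_ne_zero_forall_mem_maximalIdeal_mul_eq_zero (R : Type*) [CommRing R]
    [IsArtinianRing R] [IsLocalRing R] :
    ∃ r : R, r ≠ 0 ∧ ∀ x ∈ maximalIdeal R, x * r = 0 := by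
  obtain ⟨P, hP⟩ := associatedPrimes.nonempty R R
  obtain ⟨hPprime, r, rfl⟩ := isAssociatedPrime_iff.mp hP
  have hmax : Submodule.colon ⊥ {r} = maximalIdeal R :=
    eq_maximalIdeal (IsArtinianRing.isMaximal_of_isPrime _)
  refine ⟨r, ?_, fun x hx ↦ ?_⟩
  · rintro rfl
    exact hPprime.ne_top (by ext; simp [Submodule.mem_colon_singleton])
  · rw [← hmax] at hx
    simpa using Submodule.mem_colon_singleton.mp hx

theorem LinearIndependent.map_residue {R ι κ : Type*} [CommRing R] [IsArtinianRing R]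
    [IsLocalRing R] [Fintype ι] {v : ι → κ → R} (hv : LinearIndependent R v) :
    LinearIndependent (ResidueField R) (fun i j ↦ residue R (v i j)) := by
  obtain ⟨r, hr0, hr⟩ := exists_ne_zero_forall_mem_maximalIdeal_mul_eq_zero R
  rw [Fintype.linearIndependent_iff] at hv ⊢
  intro g hg i
  obtain ⟨c, rfl⟩ : ∃ c : ι → R, (fun i ↦ residue R (c i)) = g :=
    ⟨_, funext fun i ↦ Function.surjInv_eq residue_surjective (g i)⟩
  have hmem : ∀ j, ∑ i, c i * v i j ∈ maximalIdeal R := fun j ↦ by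
    rw [← residue_eq_zero_iff]
    simpa using congrFun hg j
  have hcr : ∀ i, c i * r = 0 := hv (fun i ↦ c i * r) <| funext fun j ↦ by
    simpa [Finset.sum_apply, Finset.sum_mul, mul_right_comm] using hr _ (hmem j)
  rw [residue_eq_zero_iff]
  by_contra hc
  exact hr0 (((notMem_maximalIdeal.mp hc).mul_right_eq_zero).mp (hcr i))

theorem exists_unimodular_extension_of_map {R S : Type*} [CommRing R] [CommRing S]
    (f : R →+* S) [IsLocalHom f] (hf : Function.Surjective f) {m n : ℕ} (hmn : m ≤ n)
    (v : Fin m → Fin n → R) {w' : Fin n → Fin n → S}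
    (hw' : ∀ i, w' (Fin.castLE hmn i) = fun j ↦ f (v i j)) (hu : IsUnit (Matrix.of w')) :
    ∃ w : Fin n → Fin n → R,
      (∀ i, w (Fin.castLE hmn i) = v i) ∧ IsUnit (Matrix.of w) := by
  let w : Fin n → Fin n → R := fun i ↦
    if h : (i : ℕ) < m then v ⟨i, h⟩ else fun j ↦ Function.surjInv hf (w' i j)
  have hmap : f.mapMatrix (Matrix.of w) = Matrix.of w' := by
    ext i j
    by_cases h : (i : ℕ) < m
    · obtain ⟨i, rfl⟩ : ∃ i', Fin.castLE hmn i' = i := ⟨⟨i, h⟩, rfl⟩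
      simp [w, hw']
    · simp [w, h, Function.surjInv_eq]
  refine ⟨w, fun i ↦ by simp [w], ?_⟩
  rw [isUnit_iff_isUnit_det] at hu ⊢
  exact IsUnit.of_map f _ (by rwa [f.map_det, hmap])

namespace HasUnimodularExtensions

theorem of_field (K : Type*) [Field K] : HasUnimodularExtensions K := by
  intro m n hmn v hv
  let b := Module.Basis.sumExtend hv
  have : Finite (Fin m ⊕ Module.Basis.sumExtendIndex hv) := Module.Finite.finite_basis b
  have : Finite (Module.Basis.sumExtendIndex hv) :=
    .of_injective (Sum.inr : _ → Fin m ⊕ _) Sum.inr_injective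
  have hcard : Nat.card (Module.Basis.sumExtendIndex hv) = n - m := by
    have := Module.finrank_eq_nat_card_basis b
    rw [Nat.card_sum, Nat.card_fin, Module.finrank_fin_fun] at this
    omega
  let e : Fin m ⊕ Module.Basis.sumExtendIndex hv ≃ Fin n :=
    (Equiv.sumCongr (Equiv.refl _) (Finite.equivFinOfCardEq hcard)).trans
      (finSumFinEquiv.trans (finCongr (by omega)))
  have he : ∀ i, e.symm (Fin.castLE hmn i) = Sum.inl i := fun i ↦ by
    rw [Equiv.symm_apply_eq]; ext; simp [e]
  refine ⟨fun j ↦ b (e.symm j), fun i ↦ by simp [he, b, Module.Basis.sumExtend_inl], ?_⟩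
  exact linearIndependent_rows_iff_isUnit.mp (b.linearIndependent.comp _ e.symm.injective)

theorem of_isLocalRing (R : Type*) [CommRing R] [IsArtinianRing R] [IsLocalRing R] :
    HasUnimodularExtensions R := fun _ _ hmn v hv ↦
  let ⟨_, hw', hu⟩ := of_field (ResidueField R) hmn _ hv.map_residue
  exists_unimodular_extension_of_map (residue R) residue_surjective hmn v hw' hu

theorem pi {α : Type*} {S : α → Type*} [∀ a, CommRing (S a)]
    (h : ∀ a, HasUnimodularExtensions (S a)) : HasUnimodularExtensions (∀ a, S a) := by
  intro m n hmn v hv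
  choose w hw hu using fun a ↦ h a hmn _ (hv.pi_eval a)
  refine ⟨fun i j a ↦ w a i j, fun i ↦ funext fun j ↦ funext fun a ↦ by simp [hw], ?_⟩
  rw [isUnit_iff_isUnit_det, Pi.isUnit_iff]
  intro a
  have hdet : (Matrix.of fun i j a ↦ w a i j).det a = (Matrix.of (w a)).det :=
    (Pi.evalRingHom S a).map_det _
  rw [hdet, ← isUnit_iff_isUnit_det]
  exact hu a

theorem of_ringEquiv {R S : Type*} [CommRing R] [CommRing S] (e : R ≃+* S)
    (h : HasUnimodularExtensions S) : HasUnimodularExtensions R := fun _ _ hmn v hv ↦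
  let ⟨_, hw', hu⟩ := h hmn _ (hv.map_ringEquiv e)
  exists_unimodular_extension_of_map (e : R →+* S) e.surjective hmn v hw' hu

theorem of_isArtinianRing (R : Type*) [CommRing R] [IsArtinianRing R] :
    HasUnimodularExtensions R :=
  of_ringEquiv (MaximalSpectrum.toPiLocalizationEquiv R).toRingEquiv
    (pi fun I ↦ of_isLocalRing (Localization.AtPrime I.asIdeal))

end HasUnimodularExtensions

theorem extend_to_unimodular_basis {R : Type*} [CommRing R] [Fintype R]
    {m n : ℕ} (hmn : m ≤ n) (v : Fin m → (Fin n → R))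
    (hv : LinearIndependent R v) :
    ∃ w : Fin n → (Fin n → R),
      (∀ i : Fin m, w (Fin.castLE hmn i) = v i) ∧
        IsUnit (Matrix.of w : Matrix (Fin n) (Fin n) R) :=
  HasUnimodularExtensions.of_isArtinianRing R hmn v hv
end

section
/- Let R be a finite commutative ring, 0 ≤ m_1 ≤ m ≤ n, and let P be an m-subspace of R^n. Then the number of m_1-subspaces of R^n contained in P equals the number N_R(m_1, m) of m_1-subspaces of R^m; in particular it is independent of the choice of P. -/
open Matrix

/-- A submodule of `R^n` is a `k`-subspace if it is generated by the rows of a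
`k × n` matrix with a right inverse. -/
def IsSubspace (R : Type*) [CommRing R] (k n : ℕ)
    (P : Submodule R (Fin n → R)) : Prop :=
  ∃ A : Matrix (Fin k) (Fin n) R, (∃ B : Matrix (Fin n) (Fin k) R, A * B = 1) ∧
    P = Submodule.span R (Set.range fun i : Fin k => A i)

/-! If `P` is spanned by the rows of `A` and `A * B = 1`, then `x ↦ x ᵥ* A` maps `R^m`
isomorphically onto `P`, with inverse `y ↦ y ᵥ* B`. Both maps send `k`-subspaces to
`k`-subspaces, since they turn the rows of `C` into the rows of `C * A`, resp. `C * B`; hence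
they induce a bijection between the `k`-subspaces of `R^m` and those of `R^n` inside `P`. -/

namespace Submodule

variable {R M N : Type*} [Semiring R] [AddCommMonoid M] [AddCommMonoid N] [Module R M]
  [Module R N] {f : M →ₗ[R] N} {g : N →ₗ[R] M}

theorem map_map_of_comp_eq_id (h : g ∘ₗ f = LinearMap.id) (Q : Submodule R M) :
    (Q.map f).map g = Q := by
  rw [← map_comp, h, map_id]

theorem map_map_of_le_range (h : g ∘ₗ f = LinearMap.id) {Q : Submodule R N}
    (hQ : Q ≤ LinearMap.range f) : (Q.map g).map f = Q := by
  conv_lhs => rw [← map_comap_eq_self hQ]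
  rw [map_map_of_comp_eq_id h, map_comap_eq_self hQ]

end Submodule

namespace Matrix

variable {R : Type*} [CommRing R] {l m n : Type*} [Fintype m]

theorem vecMulLinear_comp_eq_id_of_mul_eq_one [Fintype l] [DecidableEq l] {A : Matrix l m R}
    {B : Matrix m l R} (hAB : A * B = 1) : B.vecMulLinear ∘ₗ A.vecMulLinear = LinearMap.id :=
  LinearMap.ext fun x => by simp [vecMul_vecMul, hAB]

theorem map_vecMulLinear_span_rows (C : Matrix l m R) (A : Matrix m n R) :
    (Submodule.span R (Set.range fun i => C i)).map A.vecMulLinear =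
      Submodule.span R (Set.range fun i => (C * A) i) := by
  rw [Submodule.map_span, ← Set.range_comp]
  rfl

end Matrix

namespace IsSubspace

variable {R : Type*} [CommRing R] {k m n : ℕ} {A : Matrix (Fin m) (Fin n) R}
  {B : Matrix (Fin n) (Fin m) R}

theorem map_vecMulLinear (hAB : A * B = 1) {Q : Submodule R (Fin m → R)}
    (hQ : IsSubspace R k m Q) : IsSubspace R k n (Q.map A.vecMulLinear) := by
  obtain ⟨C, ⟨D, hCD⟩, rfl⟩ := hQ
  refine ⟨C * A, ⟨B * D, ?_⟩, map_vecMulLinear_span_rows C A⟩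
  rw [Matrix.mul_assoc, ← Matrix.mul_assoc A, hAB, Matrix.one_mul, hCD]

theorem map_vecMulLinear_of_le_range (hAB : A * B = 1) {Q : Submodule R (Fin n → R)}
    (hQ : IsSubspace R k n Q) (hle : Q ≤ LinearMap.range A.vecMulLinear) :
    IsSubspace R k m (Q.map B.vecMulLinear) := by
  obtain ⟨C, ⟨D, hCD⟩, rfl⟩ := hQ
  have hCBA : C * B * A = C := by
    funext i
    obtain ⟨x, hx : x ᵥ* A = C i⟩ := hle (Submodule.subset_span ⟨i, rfl⟩)
    rw [mul_apply_eq_vecMul, mul_apply_eq_vecMul, ← hx, vecMul_vecMul x A B, hAB, vecMul_one]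
  refine ⟨C * B, ⟨A * D, ?_⟩, map_vecMulLinear_span_rows C B⟩
  rw [← Matrix.mul_assoc, hCBA, hCD]

end IsSubspace

theorem card_subspaces_contained_in_general {R : Type*} [CommRing R]
    {m₁ m n : ℕ}
    (P : Submodule R (Fin n → R)) (hP : IsSubspace R m n P) :
    Nat.card {Q : Submodule R (Fin n → R) // IsSubspace R m₁ n Q ∧ Q ≤ P} =
      Nat.card {Q : Submodule R (Fin m → R) // IsSubspace R m₁ m Q} := by
  obtain ⟨A, ⟨B, hAB⟩, rfl⟩ := hP
  have hrange : LinearMap.range A.vecMulLinear = Submodule.span R (Set.range fun i => A i) :=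
    range_vecMulLinear A
  have hBA := vecMulLinear_comp_eq_id_of_mul_eq_one hAB
  rw [← hrange]
  exact Nat.card_congr
    { toFun Q := ⟨Q.1.map B.vecMulLinear, Q.2.1.map_vecMulLinear_of_le_range hAB Q.2.2⟩
      invFun Q := ⟨Q.1.map A.vecMulLinear, Q.2.map_vecMulLinear hAB, LinearMap.map_le_range⟩
      left_inv Q := Subtype.ext (Submodule.map_map_of_le_range hBA Q.2.2)
      right_inv Q := Subtype.ext (Submodule.map_map_of_comp_eq_id hBA Q.1) }

theorem card_subspaces_contained_in {R : Type*} [CommRing R] [Fintype R]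
    {m₁ m n : ℕ} (h1 : m₁ ≤ m) (h2 : m ≤ n)
    (P : Submodule R (Fin n → R)) (hP : IsSubspace R m n P) :
    Nat.card {Q : Submodule R (Fin n → R) // IsSubspace R m₁ n Q ∧ Q ≤ P} =
      Nat.card {Q : Submodule R (Fin m → R) // IsSubspace R m₁ m Q} :=
  card_subspaces_contained_in_general P hP
end

section
/- Let R be a finite commutative ring and A, B subspaces of R^n such that dim(A+B) = dim A + dim B − dim(A ∩ B). Then (A ∩ B)^⊥ = A^⊥ + B^⊥ and (A + B)^⊥ = A^⊥ ∩ B^⊥. -/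
open Matrix

/-- The dimension of a submodule `V` of `R^n`: the maximum size of a unimodular
subset of `V`, i.e. of a family of vectors of `V` forming a matrix with a right
inverse. -/
noncomputable def subDim {R : Type*} [CommRing R] {n : ℕ}
    (V : Submodule R (Fin n → R)) : ℕ :=
  sSup {k | ∃ A : Matrix (Fin k) (Fin n) R,
    (∀ i : Fin k, A i ∈ V) ∧ ∃ B : Matrix (Fin n) (Fin k) R, A * B = 1}

open Matrix in
/-- The orthogonal complement of a submodule of `R^n` with respect to the
standard bilinear form. -/
def perp {R : Type*} [CommRing R] {n : ℕ}
    (P : Submodule R (Fin n → R)) : Submodule R (Fin n → R) where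
  carrier := {y | ∀ x ∈ P, y ⬝ᵥ x = 0}
  add_mem' := by
    intro a b ha hb x hx
    simp [add_dotProduct, ha x hx, hb x hx]
  zero_mem' := by
    intro x hx
    simp
  smul_mem' := by
    intro c a ha x hx
    simp [smul_dotProduct, ha x hx]

/-
Write `q = |R|`. If `A` is spanned by the rows of a `k × n` matrix with a right
inverse, then `perp A` is the kernel of a surjection `R^n → R^k`, so `|perp A| q^k = q^n`; for an
arbitrary submodule `V` the same argument applied to a maximal unimodular family in `V` only gives
`|perp V| q^(dim V) ≤ q^n`. Since `perp (A ⊔ B) = perp A ⊓ perp B`, the product formula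
`|X ⊔ Y| |X ⊓ Y| = |X| |Y|` and the dimension hypothesis `dim (A ⊔ B) + dim (A ⊓ B) = dim A + dim B`
give `|perp A ⊔ perp B| ≥ |perp (A ⊓ B)|`, and the inclusion `perp A ⊔ perp B ≤ perp (A ⊓ B)`
becomes an equality.
-/

section Perp

variable {R : Type*} [CommRing R] {n : ℕ}

lemma perp_antitone : Antitone (perp : Submodule R (Fin n → R) → Submodule R (Fin n → R)) :=
  fun _ _ h _ hy x hx => hy x (h hx)

lemma perp_sup (P Q : Submodule R (Fin n → R)) : perp (P ⊔ Q) = perp P ⊓ perp Q := by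
  refine le_antisymm (le_inf (perp_antitone le_sup_left) (perp_antitone le_sup_right)) ?_
  rintro y ⟨hP, hQ⟩ x hx
  obtain ⟨u, hu, v, hv, rfl⟩ := Submodule.mem_sup.mp hx
  rw [dotProduct_add, hP u hu, hQ v hv, add_zero]

lemma perp_span_rows {k : ℕ} (M : Matrix (Fin k) (Fin n) R) :
    perp (Submodule.span R (Set.range fun i : Fin k => M i)) = LinearMap.ker M.mulVecLin := by
  ext y
  simp only [LinearMap.mem_ker, mulVecLin_apply, funext_iff, Pi.zero_apply, mulVec,
    dotProduct_comm (M _)]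
  refine ⟨fun hy i => hy _ (Submodule.subset_span ⟨i, rfl⟩), fun hy x hx => ?_⟩
  induction hx using Submodule.span_induction with
  | mem x hx => obtain ⟨i, rfl⟩ := hx; exact hy i
  | zero => exact dotProduct_zero y
  | add u v _ _ hu hv => rw [dotProduct_add, hu, hv, add_zero]
  | smul c u _ hu => rw [dotProduct_smul, hu, smul_zero]

end Perp

lemma Matrix.le_of_mul_eq_one {R : Type*} [CommSemiring R] [StrongRankCondition R] {k m : ℕ}
    {C : Matrix (Fin k) (Fin m) R} {D : Matrix (Fin m) (Fin k) R} (h : C * D = 1) : k ≤ m := by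
  simpa [h, rank_one] using (rank_mul_le_left C D).trans (rank_le_width C)

section Dim

variable {R : Type*} [CommRing R] {n : ℕ}

def HasUnimodularFamily (V : Submodule R (Fin n → R)) (k : ℕ) : Prop :=
  ∃ A : Matrix (Fin k) (Fin n) R, (∀ i : Fin k, A i ∈ V) ∧ ∃ B : Matrix (Fin n) (Fin k) R, A * B = 1

lemma hasUnimodularFamily_zero (V : Submodule R (Fin n → R)) : HasUnimodularFamily V 0 :=
  ⟨0, fun i => i.elim0, 0, Subsingleton.elim _ _⟩

lemma HasUnimodularFamily.mono {V W : Submodule R (Fin n → R)} {k : ℕ}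
    (h : HasUnimodularFamily V k) (hVW : V ≤ W) : HasUnimodularFamily W k :=
  let ⟨A, hA, hinv⟩ := h
  ⟨A, fun i => hVW (hA i), hinv⟩

variable [Nontrivial R]

lemma HasUnimodularFamily.le_of_le_span {V : Submodule R (Fin n → R)} {k k₀ : ℕ}
    (h : HasUnimodularFamily V k) {M : Matrix (Fin k₀) (Fin n) R}
    (hV : V ≤ Submodule.span R (Set.range M)) : k ≤ k₀ := by
  obtain ⟨A, hA, B, hAB⟩ := h
  choose C hC using fun i => (Submodule.mem_span_range_iff_exists_fun R).mp (hV (hA i))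
  have hCM : of C * M = A := by
    ext i j
    simpa [mul_apply, Finset.sum_apply, mul_comm] using congrFun (hC i) j
  exact le_of_mul_eq_one (C := of C) (D := M * B) (by rw [← Matrix.mul_assoc, hCM, hAB])

lemma bddAbove_hasUnimodularFamily (V : Submodule R (Fin n → R)) :
    BddAbove {k | HasUnimodularFamily V k} :=
  ⟨n, fun _ ⟨_, _, _, hAB⟩ => le_of_mul_eq_one hAB⟩

lemma HasUnimodularFamily.le_subDim {V : Submodule R (Fin n → R)} {k : ℕ}
    (h : HasUnimodularFamily V k) : k ≤ subDim V :=
  le_csSup (bddAbove_hasUnimodularFamily V) h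

lemma hasUnimodularFamily_subDim (V : Submodule R (Fin n → R)) :
    HasUnimodularFamily V (subDim V) :=
  Nat.sSup_mem ⟨0, hasUnimodularFamily_zero V⟩ (bddAbove_hasUnimodularFamily V)

lemma subDim_mono {V W : Submodule R (Fin n → R)} (h : V ≤ W) : subDim V ≤ subDim W :=
  ((hasUnimodularFamily_subDim V).mono h).le_subDim

lemma subDim_of_isSubspace {V : Submodule R (Fin n → R)} {k : ℕ} (h : IsSubspace R k n V) :
    subDim V = k := by
  obtain ⟨M, hinv, rfl⟩ := h
  exact le_antisymm ((hasUnimodularFamily_subDim _).le_of_le_span le_rfl)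
    (HasUnimodularFamily.le_subDim ⟨M, fun i => Submodule.subset_span ⟨i, rfl⟩, hinv⟩)

end Dim

section Card

lemma LinearMap.card_ker_mul_card_of_surjective {R M N : Type*} [Ring R] [AddCommGroup M]
    [AddCommGroup N] [Module R M] [Module R N] (f : M →ₗ[R] N) (hf : Function.Surjective f) :
    Nat.card (ker f) * Nat.card N = Nat.card M := by
  rw [Submodule.card_eq_card_quotient_mul_card (ker f),
    Nat.card_congr (f.quotKerEquivOfSurjective hf).toEquiv]

lemma Submodule.card_sup_mul_card_inf {R M : Type*} [Ring R] [AddCommGroup M] [Module R M]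
    (X Y : Submodule R M) : Nat.card ↥(X ⊔ Y) * Nat.card ↥(X ⊓ Y) = Nat.card X * Nat.card Y := by
  have hX := card_eq_card_quotient_mul_card (comap X.subtype X ⊓ comap X.subtype Y)
  have hXY := card_eq_card_quotient_mul_card (comap (X ⊔ Y).subtype Y)
  rw [Nat.card_congr (LinearMap.quotientInfEquivSupQuotient X Y).toEquiv, ← comap_inf,
    Nat.card_congr (comapSubtypeEquivOfLe inf_le_left).toEquiv] at hX
  rw [Nat.card_congr (comapSubtypeEquivOfLe le_sup_right).toEquiv] at hXY
  rw [hX, hXY]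
  ring

lemma Submodule.eq_of_le_of_card_ge {R M : Type*} [Ring R] [AddCommGroup M] [Module R M]
    {X Y : Submodule R M} [Finite Y] (hle : X ≤ Y) (hcard : Nat.card Y ≤ Nat.card X) : X = Y :=
  toAddSubgroup_injective (AddSubgroup.eq_of_le_of_card_ge hle hcard)

variable {R : Type*} [CommRing R] [Fintype R] {n : ℕ}

lemma card_ker_mulVecLin_mul_pow {k : ℕ} {M : Matrix (Fin k) (Fin n) R}
    {N : Matrix (Fin n) (Fin k) R} (hMN : M * N = 1) :
    Nat.card (LinearMap.ker M.mulVecLin) * Fintype.card R ^ k = Fintype.card R ^ n := by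
  have hsurj : Function.Surjective M.mulVecLin := fun z => ⟨N *ᵥ z, by simp [mulVec_mulVec, hMN]⟩
  simpa [Nat.card_eq_fintype_card] using M.mulVecLin.card_ker_mul_card_of_surjective hsurj

lemma card_perp_mul_pow_of_isSubspace {V : Submodule R (Fin n → R)} {k : ℕ}
    (h : IsSubspace R k n V) : Nat.card (perp V) * Fintype.card R ^ k = Fintype.card R ^ n := by
  obtain ⟨M, ⟨N, hMN⟩, rfl⟩ := h
  rw [perp_span_rows]
  exact card_ker_mulVecLin_mul_pow hMN

lemma card_perp_mul_pow_subDim_le [Nontrivial R] (V : Submodule R (Fin n → R)) :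
    Nat.card (perp V) * Fintype.card R ^ subDim V ≤ Fintype.card R ^ n := by
  obtain ⟨M, hM, N, hMN⟩ := hasUnimodularFamily_subDim V
  have hle : perp V ≤ LinearMap.ker M.mulVecLin := by
    rw [← perp_span_rows]
    exact perp_antitone (Submodule.span_le.mpr (Set.range_subset_iff.mpr hM))
  rw [← card_ker_mulVecLin_mul_pow hMN]
  exact Nat.mul_le_mul_right _ (Nat.card_mono (Set.toFinite _) hle)

end Card

theorem perp_inf_sup {R : Type*} [CommRing R] [Fintype R] {n : ℕ}
    (A B : Submodule R (Fin n → R))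
    (hA : ∃ k, IsSubspace R k n A) (hB : ∃ k, IsSubspace R k n B)
    (hdim : subDim (A ⊔ B) = subDim A + subDim B - subDim (A ⊓ B)) :
    perp (A ⊓ B) = perp A ⊔ perp B ∧ perp (A ⊔ B) = perp A ⊓ perp B := by
  refine ⟨?_, perp_sup A B⟩
  rcases subsingleton_or_nontrivial R with _ | _
  · exact Subsingleton.elim _ _
  obtain ⟨a, hA⟩ := hA
  obtain ⟨b, hB⟩ := hB
  set q := Fintype.card R
  set s := subDim (A ⊔ B)
  set d := subDim (A ⊓ B)
  have hsd : s + d = a + b := by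
    have hda : d ≤ a := subDim_of_isSubspace hA ▸ subDim_mono inf_le_left
    rw [subDim_of_isSubspace hA, subDim_of_isSubspace hB] at hdim
    omega
  refine (Submodule.eq_of_le_of_card_ge
    (sup_le (perp_antitone inf_le_left) (perp_antitone inf_le_right)) ?_).symm
  have hcard : Nat.card (perp (A ⊓ B)) * (Nat.card (perp (A ⊔ B)) * q ^ (s + d))
      ≤ Nat.card ↥(perp A ⊔ perp B) * (Nat.card (perp (A ⊔ B)) * q ^ (s + d)) :=
    calc _ = (Nat.card (perp (A ⊓ B)) * q ^ d) * (Nat.card (perp (A ⊔ B)) * q ^ s) := by ring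
      _ ≤ q ^ n * q ^ n :=
        Nat.mul_le_mul (card_perp_mul_pow_subDim_le _) (card_perp_mul_pow_subDim_le _)
      _ = (Nat.card (perp A) * q ^ a) * (Nat.card (perp B) * q ^ b) := by
        rw [card_perp_mul_pow_of_isSubspace hA, card_perp_mul_pow_of_isSubspace hB]
      _ = Nat.card ↥(perp A ⊔ perp B) * Nat.card ↥(perp A ⊓ perp B) * q ^ (a + b) := by
        rw [Submodule.card_sup_mul_card_inf]; ring
      _ = _ := by rw [← perp_sup, hsd]; ring
  exact Nat.le_of_mul_le_mul_right hcard (Nat.mul_pos Nat.card_pos (Nat.pow_pos Fintype.card_pos))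
end
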